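/- Suppose an M×N real matrix Φ satisfies the RIP of order K+1 with isometry constant δ < 1/(3√K). Let x ∈ ℝ^N with ‖x‖₀ ≤ K and y = Φx. Consider any run of Orthogonal Matching Pursuit: a sequence of index sets Λ⁰ = ∅ and vectors defined for ℓ = 0,1,…,K−1 by: x^ℓ is a minimizer of ‖y − Φz‖₂ over all z ∈ ℝ^N with supp(z) ⊆ Λ^ℓ; r^ℓ = y − Φx^ℓ; h^ℓ = Φᵀ r^ℓ; j_ℓ is any index maximizing |h^ℓ(j)| over j ∈ {1,…,N}; and Λ^{ℓ+1} = Λ^ℓ ∪ {j_ℓ}. Then supp(x) ⊆ Λ^K, and the least-squares estimate x^K (the minimizer of ‖y − Φz‖₂ over z with supp(z) ⊆ Λ^K) equals x; that is, OMP exactly recovers x from y in K iterations. -/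

import Mathlib

/-! By induction on `ℓ`, as long as OMP has not yet captured `supp x`, every index it has chosen
lies in `supp x`. The residual is then `Φ u` with `u = x - x^ℓ` supported in `supp x`, so by the
RIP `⟨Φᵀ Φ u, u⟩ = ‖Φ u‖² ≥ (1 - δ) ‖u‖²`, and Cauchy–Schwarz forces the largest correlation
`|(Φᵀ Φ u) j|` to be at least `(1 - δ) ‖u‖ / √K`. Off `supp u` every correlation is at most
`δ ‖u‖` (polarization against a disjoint `1`-sparse vector), and `δ (√K + 1) < 1`, so the
greedy index lies in `supp u`; it is new because the least-squares residual is orthogonal to the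
columns already chosen. After `K` steps `supp x ⊆ Λ^K`, the residual vanishes, and injectivity of
`Φ` on `K`-sparse vectors gives `x^K = x`. -/

noncomputable section

namespace OMP

open Matrix Finset

/-- The support of a vector, as a `Finset`. -/
def supp {n : ℕ} (x : Fin n → ℝ) : Finset (Fin n) :=
  Finset.univ.filter fun j => x j ≠ 0

/-- The Euclidean (ℓ²) norm of a vector. -/
def l2 {n : ℕ} (x : Fin n → ℝ) : ℝ := Real.sqrt (∑ j, x j ^ 2)

/-- The ℓ^∞ norm of a vector. -/
def linf {n : ℕ} (x : Fin n → ℝ) : ℝ := ⨆ j, |x j|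

/-- The standard inner product of two vectors. -/
def dotp {n : ℕ} (x y : Fin n → ℝ) : ℝ := ∑ j, x j * y j

/-- The restriction of a vector to a set of indices (zero elsewhere). -/
def restr {n : ℕ} (Γ : Finset (Fin n)) (x : Fin n → ℝ) : Fin n → ℝ :=
  fun j => if j ∈ Γ then x j else 0

/-- The restricted isometry property of order `K` with isometry constant `δ`. -/
def RIP {M N : ℕ} (K : ℕ) (Φ : Matrix (Fin M) (Fin N) ℝ) (δ : ℝ) : Prop :=
  0 < δ ∧ δ < 1 ∧ ∀ x : Fin N → ℝ, (supp x).card ≤ K →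
    (1 - δ) * l2 x ^ 2 ≤ l2 (Φ.mulVec x) ^ 2 ∧
      l2 (Φ.mulVec x) ^ 2 ≤ (1 + δ) * l2 x ^ 2

/-- The span of the columns of `Φ` indexed by `Λ`, as a submodule of Euclidean space. -/
def colSpan {M N : ℕ} (Φ : Matrix (Fin M) (Fin N) ℝ) (Λ : Finset (Fin N)) :
    Submodule ℝ (EuclideanSpace ℝ (Fin M)) :=
  Submodule.span ℝ ((fun j => (WithLp.equiv 2 (Fin M → ℝ)).symm fun i => Φ i j) '' (Λ : Set (Fin N)))

/-- Orthogonal projection `P_Λ` onto the span of the columns of `Φ` indexed by `Λ`. -/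
def projCol {M N : ℕ} (Φ : Matrix (Fin M) (Fin N) ℝ) (Λ : Finset (Fin N))
    (v : Fin M → ℝ) : Fin M → ℝ :=
  WithLp.equiv 2 (Fin M → ℝ)
    (Submodule.orthogonalProjectionOnto (colSpan Φ Λ) ((WithLp.equiv 2 (Fin M → ℝ)).symm v) : EuclideanSpace ℝ (Fin M))

/-- The matrix `A_Λ = (I - P_Λ) Φ`: the columns of `Φ` orthogonalized against `colSpan Φ Λ`. -/
def Amat {M N : ℕ} (Φ : Matrix (Fin M) (Fin N) ℝ) (Λ : Finset (Fin N)) :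
    Matrix (Fin M) (Fin N) ℝ :=
  Matrix.of fun i j => Φ i j - projCol Φ Λ (fun i' => Φ i' j) i

variable {m n : ℕ}

lemma mem_supp {x : Fin n → ℝ} {j : Fin n} : j ∈ supp x ↔ x j ≠ 0 := by
  simp [supp]

lemma supp_add_subset (x y : Fin n → ℝ) : supp (x + y) ⊆ supp x ∪ supp y := by
  intro j
  simp only [mem_union, mem_supp, Pi.add_apply]
  contrapose!
  rintro ⟨hx, hy⟩
  simp [hx, hy]

lemma supp_sub_subset (x y : Fin n → ℝ) : supp (x - y) ⊆ supp x ∪ supp y := by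
  simpa [sub_eq_add_neg, supp] using supp_add_subset x (-y)

lemma supp_smul_subset (c : ℝ) (x : Fin n → ℝ) : supp (c • x) ⊆ supp x := by
  intro j
  simp only [mem_supp, Pi.smul_apply, smul_eq_mul]
  exact right_ne_zero_of_mul

lemma supp_single_one (j : Fin n) : supp (Pi.single j (1 : ℝ)) = {j} := by
  ext k
  by_cases hk : k = j <;> simp [mem_supp, hk]

lemma dotProduct_eq_zero_of_disjoint_supp {x y : Fin n → ℝ}
    (h : Disjoint (supp x) (supp y)) : x ⬝ᵥ y = 0 := by
  refine Finset.sum_eq_zero fun j _ => ?_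
  by_contra hxy
  exact disjoint_left.mp h (mem_supp.mpr (left_ne_zero_of_mul hxy))
    (mem_supp.mpr (right_ne_zero_of_mul hxy))

lemma l2_nonneg (x : Fin n → ℝ) : 0 ≤ l2 x := Real.sqrt_nonneg _

lemma l2_sq (x : Fin n → ℝ) : l2 x ^ 2 = x ⬝ᵥ x := by
  rw [l2, Real.sq_sqrt (by positivity)]
  exact Finset.sum_congr rfl fun j _ => sq _

lemma l2_eq_zero {x : Fin n → ℝ} : l2 x = 0 ↔ x = 0 := by
  rw [← pow_eq_zero_iff two_ne_zero, l2_sq, dotProduct_self_eq_zero]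

lemma l2_zero : l2 (0 : Fin n → ℝ) = 0 := l2_eq_zero.mpr rfl

lemma l2_single_one (j : Fin n) : l2 (Pi.single j (1 : ℝ)) = 1 := by
  rw [← sq_eq_sq₀ (l2_nonneg _) zero_le_one, l2_sq, dotProduct_single_one]
  simp

lemma sum_abs_le_sqrt_card_mul_l2 (x : Fin n → ℝ) :
    ∑ j ∈ supp x, |x j| ≤ √(supp x).card * l2 x := by
  have hsq : ∑ j ∈ supp x, |x j| ^ 2 ≤ l2 x ^ 2 := by
    simp only [sq_abs, l2_sq, dotProduct, ← sq]
    exact sum_le_univ_sum_of_nonneg fun j => sq_nonneg _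
  refine le_of_sq_le_sq ?_ (mul_nonneg (Real.sqrt_nonneg _) (l2_nonneg _))
  rw [mul_pow, Real.sq_sqrt (Nat.cast_nonneg _)]
  exact sq_sum_le_card_mul_sum_sq.trans (mul_le_mul_of_nonneg_left hsq (Nat.cast_nonneg _))

lemma transpose_mulVec_apply (Φ : Matrix (Fin m) (Fin n) ℝ) (r : Fin m → ℝ) (j : Fin n) :
    (Φᵀ *ᵥ r) j = r ⬝ᵥ (Φ *ᵥ Pi.single j 1) := by
  rw [dotProduct_mulVec, dotProduct_single_one, mulVec_transpose]

namespace RIP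

variable {K : ℕ} {Φ : Matrix (Fin m) (Fin n) ℝ} {δ : ℝ}

lemma mono {L : ℕ} (hΦ : RIP K Φ δ) (hLK : L ≤ K) : RIP L Φ δ :=
  ⟨hΦ.1, hΦ.2.1, fun x hx => hΦ.2.2 x (hx.trans hLK)⟩

lemma eq_zero_of_mulVec_eq_zero (hΦ : RIP K Φ δ) {u : Fin n → ℝ} (hu : (supp u).card ≤ K)
    (h : Φ *ᵥ u = 0) : u = 0 := by
  have hlow := (hΦ.2.2 u hu).1
  rw [h, l2_sq (0 : Fin m → ℝ), zero_dotProduct] at hlow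
  have : l2 u ^ 2 ≤ 0 := nonpos_of_mul_nonpos_right hlow (sub_pos.mpr hΦ.2.1)
  exact l2_eq_zero.mp (pow_eq_zero_iff two_ne_zero |>.mp (le_antisymm this (sq_nonneg _)))

/-- Polarization: `4 a b ⟨Φu, Φv⟩ = ‖Φ(au + bv)‖² - ‖Φ(au - bv)‖²` with `a = ‖v‖`, `b = ‖u‖`,
and both `au ± bv` have squared norm `2 a² b²`. -/
lemma abs_dotProduct_mulVec_le (hΦ : RIP K Φ δ) {u v : Fin n → ℝ}
    (hdisj : Disjoint (supp u) (supp v)) (hcard : (supp u ∪ supp v).card ≤ K) :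
    |(Φ *ᵥ u) ⬝ᵥ (Φ *ᵥ v)| ≤ δ * l2 u * l2 v := by
  set a := l2 v
  set b := l2 u
  set c := (Φ *ᵥ u) ⬝ᵥ (Φ *ᵥ v)
  have huv : u ⬝ᵥ v = 0 := dotProduct_eq_zero_of_disjoint_supp hdisj
  have key : ∀ s : ℝ, s ^ 2 = 1 →
      (1 - δ) * (2 * a ^ 2 * b ^ 2) ≤ a ^ 2 * l2 (Φ *ᵥ u) ^ 2 + 2 * s * a * b * c
          + b ^ 2 * l2 (Φ *ᵥ v) ^ 2 ∧
        a ^ 2 * l2 (Φ *ᵥ u) ^ 2 + 2 * s * a * b * c + b ^ 2 * l2 (Φ *ᵥ v) ^ 2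
          ≤ (1 + δ) * (2 * a ^ 2 * b ^ 2) := by
    intro s hs
    have hsupp : supp (a • u + (s * b) • v) ⊆ supp u ∪ supp v :=
      (supp_add_subset _ _).trans (union_subset_union (supp_smul_subset _ _) (supp_smul_subset _ _))
    have hw : l2 (a • u + (s * b) • v) ^ 2 = 2 * a ^ 2 * b ^ 2 := by
      simp only [l2_sq, add_dotProduct, dotProduct_add, smul_dotProduct, dotProduct_smul,
        dotProduct_comm v u, huv, smul_eq_mul]
      rw [← l2_sq u, ← l2_sq v]
      linear_combination a ^ 2 * b ^ 2 * hs
    have hΦw : l2 (Φ *ᵥ (a • u + (s * b) • v)) ^ 2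
        = a ^ 2 * l2 (Φ *ᵥ u) ^ 2 + 2 * s * a * b * c + b ^ 2 * l2 (Φ *ᵥ v) ^ 2 := by
      simp only [l2_sq, mulVec_add, mulVec_smul, add_dotProduct, dotProduct_add, smul_dotProduct,
        dotProduct_smul, dotProduct_comm (Φ *ᵥ v) (Φ *ᵥ u), smul_eq_mul]
      linear_combination (b ^ 2 * (Φ *ᵥ v) ⬝ᵥ (Φ *ᵥ v)) * hs
    rw [← hw, ← hΦw]
    exact hΦ.2.2 _ ((card_le_card hsupp).trans hcard)
  have hplus := key 1 (by norm_num)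
  have hminus := key (-1) (by norm_num)
  have hab : |a * b * c| ≤ δ * (a * b) ^ 2 := abs_le.mpr ⟨by nlinarith, by nlinarith⟩
  rcases (mul_nonneg (l2_nonneg v) (l2_nonneg u)).eq_or_lt with hab0 | hab0
  · have hc : c = 0 := by
      rcases mul_eq_zero.mp hab0.symm with ha | hb
      · simp [c, l2_eq_zero.mp ha]
      · simp [c, l2_eq_zero.mp hb]
    rw [hc, abs_zero, mul_assoc, mul_comm b a, ← hab0, mul_zero]
  · rw [abs_mul, abs_of_pos hab0] at hab
    nlinarith

lemma abs_transpose_mulVec_mulVec_le (hΦ : RIP (K + 1) Φ δ) {u : Fin n → ℝ}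
    (hu : (supp u).card ≤ K) {j : Fin n} (hj : j ∉ supp u) :
    |(Φᵀ *ᵥ (Φ *ᵥ u)) j| ≤ δ * l2 u := by
  have h := hΦ.abs_dotProduct_mulVec_le (u := u) (v := Pi.single j 1)
    (by rw [supp_single_one]; exact disjoint_singleton_right.mpr hj)
    (by rw [supp_single_one, union_comm, ← insert_eq]; exact (card_insert_le _ _).trans (by omega))
  rwa [l2_single_one, mul_one, ← transpose_mulVec_apply] at h

lemma one_sub_mul_l2_le (hΦ : RIP K Φ δ) {u : Fin n → ℝ} (hu : (supp u).card ≤ K) {js : Fin n}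
    (hjs : ∀ j, |(Φᵀ *ᵥ (Φ *ᵥ u)) j| ≤ |(Φᵀ *ᵥ (Φ *ᵥ u)) js|) :
    (1 - δ) * l2 u ≤ √K * |(Φᵀ *ᵥ (Φ *ᵥ u)) js| := by
  set h := Φᵀ *ᵥ (Φ *ᵥ u)
  have hcorr : l2 (Φ *ᵥ u) ^ 2 = ∑ j ∈ supp u, h j * u j := by
    rw [l2_sq, dotProduct_mulVec, ← mulVec_transpose]
    refine (sum_subset (subset_univ _) fun j _ hj => ?_).symm
    rw [mem_supp, not_not] at hj
    rw [hj, mul_zero]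
  have hsq : (1 - δ) * l2 u ^ 2 ≤ √K * |h js| * l2 u := calc
    (1 - δ) * l2 u ^ 2 ≤ l2 (Φ *ᵥ u) ^ 2 := (hΦ.2.2 u hu).1
    _ = ∑ j ∈ supp u, h j * u j := hcorr
    _ ≤ ∑ j ∈ supp u, |h js| * |u j| := sum_le_sum fun j _ =>
      (le_abs_self _).trans ((abs_mul _ _).trans_le
        (mul_le_mul_of_nonneg_right (hjs j) (abs_nonneg _)))
    _ = |h js| * ∑ j ∈ supp u, |u j| := (mul_sum ..).symm
    _ ≤ |h js| * (√(supp u).card * l2 u) :=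
      mul_le_mul_of_nonneg_left (sum_abs_le_sqrt_card_mul_l2 u) (abs_nonneg _)
    _ ≤ √K * |h js| * l2 u := by
      have : √(supp u).card ≤ √K := Real.sqrt_le_sqrt (by exact_mod_cast hu)
      nlinarith [mul_nonneg (abs_nonneg (h js)) (l2_nonneg u)]
  rcases (l2_nonneg u).eq_or_lt with h0 | hpos
  · rw [← h0, mul_zero]
    positivity
  · rw [sq, ← mul_assoc] at hsq
    exact le_of_mul_le_mul_right hsq hpos

lemma mem_supp_of_forall_abs_le (hΦ : RIP (K + 1) Φ δ) (hδ : δ * (√K + 1) < 1)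
    {u : Fin n → ℝ} (hu : (supp u).card ≤ K) (hu0 : u ≠ 0) {js : Fin n}
    (hjs : ∀ j, |(Φᵀ *ᵥ (Φ *ᵥ u)) j| ≤ |(Φᵀ *ᵥ (Φ *ᵥ u)) js|) :
    js ∈ supp u ∧ (Φᵀ *ᵥ (Φ *ᵥ u)) js ≠ 0 := by
  have hlow := (hΦ.mono K.le_succ).one_sub_mul_l2_le hu hjs
  have hpos : 0 < l2 u := (l2_nonneg u).lt_of_ne' (l2_eq_zero.not.mpr hu0)
  have hδ1 := hΦ.2.1
  refine ⟨?_, fun h0 => ?_⟩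
  · by_contra hj
    have hup := hΦ.abs_transpose_mulVec_mulVec_le hu hj
    nlinarith [Real.sqrt_nonneg K]
  · rw [h0, abs_zero, mul_zero] at hlow
    nlinarith

end RIP

lemma mul_sqrt_add_one_lt_one {K : ℕ} {δ : ℝ} (hδ0 : 0 < δ) (hδ : δ < 1 / (3 * √K)) :
    δ * (√K + 1) < 1 := by
  have hK : 1 ≤ √(K : ℝ) := by
    rcases K.eq_zero_or_pos with rfl | hK
    · simp only [CharP.cast_eq_zero, Real.sqrt_zero, mul_zero, div_zero] at hδ
      linarith
    · exact Real.one_le_sqrt.mpr (by exact_mod_cast hK)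
  rw [lt_div_iff₀ (by positivity)] at hδ
  nlinarith

lemma card_le_of_eq_insert {α : Type*} [DecidableEq α] {K : ℕ} {Λ : ℕ → Finset α} {j : ℕ → α}
    (h0 : Λ 0 = ∅) (hstep : ∀ ℓ < K, Λ (ℓ + 1) = insert (j ℓ) (Λ ℓ)) :
    ∀ ℓ ≤ K, (Λ ℓ).card ≤ ℓ
  | 0, _ => by simp [h0]
  | ℓ + 1, hℓ => by
    rw [hstep ℓ hℓ]
    exact (card_insert_le _ _).trans
      (Nat.succ_le_succ (card_le_of_eq_insert h0 hstep ℓ (Nat.le_of_succ_le hℓ)))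

def IsLeastSquares (Φ : Matrix (Fin m) (Fin n) ℝ) (y : Fin m → ℝ) (Λ : Finset (Fin n))
    (w : Fin n → ℝ) : Prop :=
  supp w ⊆ Λ ∧ ∀ z : Fin n → ℝ, supp z ⊆ Λ → l2 (y - Φ *ᵥ w) ≤ l2 (y - Φ *ᵥ z)

namespace IsLeastSquares

variable {Φ : Matrix (Fin m) (Fin n) ℝ} {y : Fin m → ℝ} {Λ : Finset (Fin n)} {w : Fin n → ℝ}

lemma transpose_mulVec_sub_eq_zero (hw : IsLeastSquares Φ y Λ w) {j : Fin n} (hj : j ∈ Λ) :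
    (Φᵀ *ᵥ (y - Φ *ᵥ w)) j = 0 := by
  set r := y - Φ *ᵥ w
  set φ := Φ *ᵥ Pi.single j 1
  have hquad : ∀ t : ℝ, 0 ≤ φ ⬝ᵥ φ * (t * t) + -2 * (r ⬝ᵥ φ) * t + 0 := by
    intro t
    have hsupp : supp (w + t • Pi.single j 1) ⊆ Λ :=
      (supp_add_subset _ _).trans <| union_subset hw.1 <| (supp_smul_subset _ _).trans <| by
        rw [supp_single_one]; exact singleton_subset_iff.mpr hj
    have hle := pow_le_pow_left₀ (l2_nonneg _) (hw.2 _ hsupp) 2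
    have hres : y - Φ *ᵥ (w + t • Pi.single j 1) = r - t • φ := by
      rw [mulVec_add, mulVec_smul, sub_add_eq_sub_sub]
    have hexp : (r - t • φ) ⬝ᵥ (r - t • φ) = r ⬝ᵥ r - 2 * t * (r ⬝ᵥ φ) + φ ⬝ᵥ φ * (t * t) := by
      simp only [sub_dotProduct, dotProduct_sub, smul_dotProduct, dotProduct_smul, smul_eq_mul,
        dotProduct_comm φ r]
      ring
    change l2 r ^ 2 ≤ _ at hle
    rw [hres, l2_sq, l2_sq, hexp] at hle
    linarith
  have hdisc := discrim_le_zero hquad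
  rw [discrim] at hdisc
  rw [transpose_mulVec_apply]
  nlinarith [sq_nonneg (r ⬝ᵥ φ)]

lemma eq_of_supp_subset {K : ℕ} {δ : ℝ} (hΦ : RIP K Φ δ) (hΛ : Λ.card ≤ K) {x : Fin n → ℝ}
    (hw : IsLeastSquares Φ (Φ *ᵥ x) Λ w) (hx : supp x ⊆ Λ) : w = x := by
  have hres : l2 (Φ *ᵥ x - Φ *ᵥ w) = 0 := by
    refine le_antisymm ?_ (l2_nonneg _)
    simpa [l2_zero] using hw.2 x hx
  rw [l2_eq_zero, ← mulVec_sub] at hres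
  have hcard : (supp (x - w)).card ≤ K :=
    (card_le_card ((supp_sub_subset x w).trans (union_subset hx hw.1))).trans hΛ
  exact (sub_eq_zero.mp (hΦ.eq_zero_of_mulVec_eq_zero hcard hres)).symm

end IsLeastSquares

theorem omp_step {K : ℕ} {Φ : Matrix (Fin m) (Fin n) ℝ} {δ : ℝ} (hΦ : RIP (K + 1) Φ δ)
    (hδ : δ * (√K + 1) < 1) {x : Fin n → ℝ} (hx : (supp x).card ≤ K) {Λ : Finset (Fin n)}
    (hΛ : Λ ⊆ supp x) {w : Fin n → ℝ} (hw : IsLeastSquares Φ (Φ *ᵥ x) Λ w) {js : Fin n}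
    (hjs : ∀ j, |(Φᵀ *ᵥ (Φ *ᵥ x - Φ *ᵥ w)) j| ≤ |(Φᵀ *ᵥ (Φ *ᵥ x - Φ *ᵥ w)) js|) :
    supp x ⊆ Λ ∨ (js ∈ supp x ∧ js ∉ Λ) := by
  by_cases hxw : x = w
  · rw [hxw]
    exact Or.inl hw.1
  have hsupp : supp (x - w) ⊆ supp x :=
    (supp_sub_subset x w).trans (union_subset subset_rfl (hw.1.trans hΛ))
  rw [← mulVec_sub] at hjs
  obtain ⟨hmem, hne⟩ := hΦ.mem_supp_of_forall_abs_le hδ ((card_le_card hsupp).trans hx)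
    (sub_ne_zero.mpr hxw) hjs
  refine Or.inr ⟨hsupp hmem, fun hjΛ => hne ?_⟩
  rw [mulVec_sub]
  exact hw.transpose_mulVec_sub_eq_zero hjΛ

/-- exact recovery of `K`-sparse signals by OMP under the RIP of order
`K + 1` with `δ < 1/(3√K)`. -/
theorem stmt7 {M N K : ℕ} (Φ : Matrix (Fin M) (Fin N) ℝ) (δ : ℝ) (x : Fin N → ℝ)
    (hRIP : RIP (K + 1) Φ δ) (hδ : δ < 1 / (3 * Real.sqrt K))
    (hsp : (supp x).card ≤ K)
    (y : Fin M → ℝ) (hy : y = Φ.mulVec x)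
    (Λ : ℕ → Finset (Fin N)) (xs : ℕ → Fin N → ℝ) (jsel : ℕ → Fin N)
    (hΛ0 : Λ 0 = ∅)
    (hls : ∀ ℓ ≤ K, supp (xs ℓ) ⊆ Λ ℓ ∧
      ∀ z : Fin N → ℝ, supp z ⊆ Λ ℓ →
        l2 (y - Φ.mulVec (xs ℓ)) ≤ l2 (y - Φ.mulVec z))
    (hsel : ∀ ℓ < K, ∀ j : Fin N,
      |(Φᵀ.mulVec (y - Φ.mulVec (xs ℓ))) j| ≤ |(Φᵀ.mulVec (y - Φ.mulVec (xs ℓ))) (jsel ℓ)|)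
    (hstep : ∀ ℓ < K, Λ (ℓ + 1) = insert (jsel ℓ) (Λ ℓ)) :
    supp x ⊆ Λ K ∧ xs K = x := by
  subst hy
  have hδ' := mul_sqrt_add_one_lt_one hRIP.1 hδ
  have hinv : ∀ ℓ ≤ K, supp x ⊆ Λ ℓ ∨ (Λ ℓ ⊆ supp x ∧ (Λ ℓ).card = ℓ) := by
    intro ℓ hℓ
    induction ℓ with
    | zero => simp [hΛ0]
    | succ ℓ ih =>
      rw [hstep ℓ hℓ]
      rcases ih (Nat.le_of_succ_le hℓ) with hx | ⟨hΛx, hcard⟩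
      · exact Or.inl (hx.trans (subset_insert _ _))
      rcases omp_step hRIP hδ' hsp hΛx (hls ℓ (Nat.le_of_succ_le hℓ)) (hsel ℓ hℓ) with
        hx | ⟨hnew, hnotin⟩
      · exact Or.inl (hx.trans (subset_insert _ _))
      · exact Or.inr ⟨insert_subset hnew hΛx, by rw [card_insert_of_notMem hnotin, hcard]⟩
  have hsub : supp x ⊆ Λ K := by
    rcases hinv K le_rfl with hx | ⟨hΛx, hcard⟩
    · exact hx
    · exact (eq_of_subset_of_card_le hΛx (hcard.symm ▸ hsp)).ge
  have hcardK := (card_le_of_eq_insert hΛ0 hstep K le_rfl).trans K.le_succ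
  exact ⟨hsub, IsLeastSquares.eq_of_supp_subset hRIP hcardK (hls K le_rfl) hsub⟩

end OMP
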